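/- Let f ∈ C^ℓ([-1,1]) and let α_k be the coefficients of its Legendre expansion f = Σ α_k P_k. Then α_k · k^ℓ → 0 as k → ∞. -/

import Mathlib

/-!
The Legendre polynomials `P_n` (normalised by `P_n(1) = 1`) satisfy `∫_{-1}^1 P_m P_n = 0` for
`m ≠ n` and `∫_{-1}^1 P_n² = 2/(2n+1)`, so the `√(n+1/2) P_n` form an orthonormal system and
Bessel's inequality gives `√(n+1/2) ∫ f P_n → 0` for continuous `f`. Since
`P'_{n+2} - P'_n = (2n+3) P_{n+1}` and `P_{n+2} - P_n` vanishes at `±1`, integrating by parts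
gives `(2n+3) ∫ f P_{n+1} = ∫ f' P_n - ∫ f' P_{n+2}`, so every derivative of `f` buys one more
factor of `n` in the decay of the coefficients; induction on `ℓ` concludes.
-/

open Polynomial MeasureTheory Filter Topology Set
open scoped ENNReal

theorem MeasureTheory.MemLp.inner_toLp_toLp_eq_integral {α : Type*} [MeasurableSpace α]
    {μ : Measure α} {f g : α → ℝ} (hf : MemLp f 2 μ) (hg : MemLp g 2 μ) :
    inner ℝ (hf.toLp f) (hg.toLp g) = ∫ x, f x * g x ∂μ := by
  rw [L2.inner_def]
  refine integral_congr_ae ?_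
  filter_upwards [hf.coeFn_toLp, hg.coeFn_toLp] with x hfx hgx
  simp [hfx, hgx, mul_comm]

theorem tendsto_integral_mul_of_orthonormal {α ι : Type*} [MeasurableSpace α] {μ : Measure α}
    [DecidableEq ι] {e : ι → α → ℝ} (he : ∀ i, MemLp (e i) 2 μ)
    (horth : ∀ i j, ∫ x, e i x * e j x ∂μ = if i = j then 1 else 0) {f : α → ℝ}
    (hf : MemLp f 2 μ) :
    Tendsto (fun i => ∫ x, f x * e i x ∂μ) cofinite (𝓝 0) := by
  have hon : Orthonormal ℝ fun i => (he i).toLp (e i) := by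
    rw [orthonormal_iff_ite]
    intro i j
    rw [MemLp.inner_toLp_toLp_eq_integral, horth]
  have hsq := (hon.inner_products_summable (hf.toLp f)).tendsto_cofinite_zero.sqrt
  simp only [MemLp.inner_toLp_toLp_eq_integral, Real.sqrt_sq (norm_nonneg _), Real.sqrt_zero]
    at hsq
  simpa only [mul_comm (e _ _)] using tendsto_zero_iff_norm_tendsto_zero.2 hsq

theorem ContinuousOn.memLp_restrict {X E : Type*} [TopologicalSpace X] [MeasurableSpace X]
    [OpensMeasurableSpace X] [NormedAddCommGroup E] {μ : Measure X} [IsFiniteMeasureOnCompacts μ]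
    {s : Set X} {f : X → E} (hf : ContinuousOn f s) (hs : IsCompact s) (hsm : MeasurableSet s)
    (p : ℝ≥0∞) : MemLp f p (μ.restrict s) := by
  have := (isFiniteMeasure_restrict (μ := μ)).2 hs.measure_lt_top.ne
  obtain ⟨C, hC⟩ := hs.exists_bound_of_continuousOn hf
  exact .of_bound (hf.aestronglyMeasurable_of_isCompact hs hsm) C
    ((ae_restrict_iff' hsm).2 (.of_forall hC))

theorem tendsto_mul_of_two_mul_add_three_mul_eq_sub {a b w v : ℕ → ℝ} {C : ℝ} (hC : 0 ≤ C)
    (hrec : ∀ n : ℕ, (2 * (n : ℝ) + 3) * b (n + 1) = a n - a (n + 2))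
    (hw₀ : ∀ n, 0 ≤ w n) (hw : Monotone w) (hv : ∀ n, |v (n + 1)| ≤ C * (2 * n + 3) * w n)
    (ha : Tendsto (fun n => a n * w n) atTop (𝓝 0)) :
    Tendsto (fun n => b n * v n) atTop (𝓝 0) := by
  rw [← tendsto_add_atTop_iff_nat 1]
  have ha₂ := ha.comp (tendsto_add_atTop_nat 2)
  refine squeeze_zero_norm (a := fun n => C * (‖a n * w n‖ + ‖a (n + 2) * w (n + 2)‖))
    (fun n => ?_) (by simpa using (ha.norm.add ha₂.norm).const_mul C)
  have h2n3 : (0 : ℝ) < 2 * n + 3 := by positivity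
  calc ‖b (n + 1) * v (n + 1)‖ = |b (n + 1)| * |v (n + 1)| := by
        rw [Real.norm_eq_abs, abs_mul]
    _ ≤ |b (n + 1)| * (C * (2 * n + 3) * w n) := by gcongr; exact hv n
    _ = C * (|(2 * (n : ℝ) + 3) * b (n + 1)| * w n) := by
        rw [abs_mul, abs_of_pos h2n3]; ring
    _ ≤ C * ((|a n| + |a (n + 2)|) * w n) := by
        rw [hrec]
        exact mul_le_mul_of_nonneg_left (mul_le_mul_of_nonneg_right (abs_sub _ _) (hw₀ n)) hC
    _ ≤ C * (|a n| * w n + |a (n + 2)| * w (n + 2)) := by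
        rw [add_mul]; gcongr; exact hw (by omega)
    _ = C * (‖a n * w n‖ + ‖a (n + 2) * w (n + 2)‖) := by
        simp only [Real.norm_eq_abs, abs_mul, abs_of_nonneg (hw₀ _)]

theorem integral_eval_derivative (R : ℝ[X]) (a b : ℝ) :
    ∫ x in a..b, (derivative R).eval x = R.eval b - R.eval a :=
  intervalIntegral.integral_eq_sub_of_hasDerivAt (fun x _ => R.hasDerivAt x)
    (R.derivative.continuous.intervalIntegrable a b)

noncomputable def legendre : ℕ → ℝ[X]
  | 0 => 1
  | 1 => X
  | n + 2 => C ((n + 2 : ℝ)⁻¹) *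
      ((2 * (n : ℝ[X]) + 3) * X * legendre (n + 1) - ((n : ℝ[X]) + 1) * legendre n)

theorem legendre_add_two (n : ℕ) :
    ((n : ℝ[X]) + 2) * legendre (n + 2) =
      (2 * (n : ℝ[X]) + 3) * X * legendre (n + 1) - ((n : ℝ[X]) + 1) * legendre n := by
  rw [legendre, ← mul_assoc, show (n : ℝ[X]) + 2 = C ((n : ℝ) + 2) by simp [C_ofNat],
    ← C_mul, mul_inv_cancel₀ (by positivity), C_1, one_mul]

theorem legendre_eval_of_sq_eq_one {x : ℝ} (hx : x ^ 2 = 1) (n : ℕ) :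
    (legendre n).eval x = x ^ n := by
  induction n using Nat.twoStepInduction with
  | zero => simp [legendre]
  | one => simp [legendre]
  | more n ih₀ ih₁ =>
    have h := congrArg (eval x) (legendre_add_two n)
    simp only [eval_mul, eval_sub, eval_add, eval_natCast, eval_ofNat, eval_one, eval_X, ih₀,
      ih₁] at h
    refine mul_left_cancel₀ (by positivity : (n : ℝ) + 2 ≠ 0) ?_
    linear_combination h + ((n : ℝ) + 1) * x ^ n * hx

theorem derivative_legendre_recurrences (n : ℕ) :
    derivative (legendre (n + 1)) =
      X * derivative (legendre n) + ((n : ℝ[X]) + 1) * legendre n ∧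
    X * derivative (legendre (n + 1)) =
      derivative (legendre n) + ((n : ℝ[X]) + 1) * legendre (n + 1) := by
  induction n with
  | zero => simp [legendre]
  | succ n ih =>
    obtain ⟨hA, hB⟩ := ih
    have hn₂ : (n : ℝ[X]) + 2 ≠ 0 := by norm_cast
    have hrec := legendre_add_two n
    have hd := congrArg derivative hrec
    simp only [derivative_mul, derivative_sub, derivative_add, derivative_natCast,
      derivative_ofNat, derivative_one, derivative_X] at hd
    have hA' : derivative (legendre (n + 2)) =
        X * derivative (legendre (n + 1)) + ((n : ℝ[X]) + 2) * legendre (n + 1) := by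
      refine mul_left_cancel₀ hn₂ ?_
      linear_combination hd + ((n : ℝ[X]) + 1) * hB
    push_cast
    refine ⟨by linear_combination hA', mul_left_cancel₀ hn₂ ?_⟩
    linear_combination ((n : ℝ[X]) + 2) * (X * hA' + (X * hB - hA) - hrec)

theorem derivative_legendre_succ (n : ℕ) :
    derivative (legendre (n + 1)) =
      X * derivative (legendre n) + ((n : ℝ[X]) + 1) * legendre n :=
  (derivative_legendre_recurrences n).1

theorem X_mul_derivative_legendre_succ (n : ℕ) :
    X * derivative (legendre (n + 1)) =
      derivative (legendre n) + ((n : ℝ[X]) + 1) * legendre (n + 1) :=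
  (derivative_legendre_recurrences n).2

theorem derivative_legendre_add_two_sub (n : ℕ) :
    derivative (legendre (n + 2) - legendre n) = (2 * (n : ℝ[X]) + 3) * legendre (n + 1) := by
  have h := derivative_legendre_succ (n + 1)
  push_cast at h
  rw [derivative_sub]
  linear_combination h + X_mul_derivative_legendre_succ n

theorem derivative_sq_sub_one_mul_derivative_legendre (n : ℕ) :
    derivative ((X ^ 2 - 1) * derivative (legendre n)) =
      (n : ℝ[X]) * ((n : ℝ[X]) + 1) * legendre n := by
  cases n with
  | zero => simp [legendre]
  | succ n =>
    have hB := X_mul_derivative_legendre_succ n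
    have h : (X ^ 2 - 1) * derivative (legendre (n + 1)) =
        ((n : ℝ[X]) + 1) * (X * legendre (n + 1) - legendre n) := by
      linear_combination X * hB - derivative_legendre_succ n
    rw [h]
    simp only [derivative_mul, derivative_sub, derivative_add, derivative_natCast,
      derivative_one, derivative_X]
    push_cast
    linear_combination ((n : ℝ[X]) + 1) * hB

theorem integral_legendre_mul_legendre_of_ne {m n : ℕ} (hmn : m ≠ n) :
    ∫ x in (-1 : ℝ)..1, (legendre m).eval x * (legendre n).eval x = 0 := by
  -- `(X² - 1)` times the Wronskian of `P_m` and `P_n`; it vanishes at `±1`.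
  set W := (X ^ 2 - 1) * derivative (legendre m) * legendre n -
    legendre m * ((X ^ 2 - 1) * derivative (legendre n))
  have hW :
      derivative W = ((m : ℝ[X]) * (m + 1) - n * (n + 1)) * (legendre m * legendre n) := by
    rw [derivative_sub, derivative_mul (f := (X ^ 2 - 1) * derivative (legendre m)),
      derivative_mul (f := legendre m), derivative_sq_sub_one_mul_derivative_legendre,
      derivative_sq_sub_one_mul_derivative_legendre]
    ring
  have hne : (m : ℝ) * (m + 1) - n * (n + 1) ≠ 0 := by
    intro h
    rcases lt_or_gt_of_ne hmn with hlt | hlt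
    · have : (m : ℝ) < n := by exact_mod_cast hlt
      nlinarith
    · have : (n : ℝ) < m := by exact_mod_cast hlt
      nlinarith
  have h := integral_eval_derivative W (-1) 1
  simp only [hW, W, eval_mul, eval_sub, eval_add, eval_natCast, eval_pow, eval_X, eval_one,
    intervalIntegral.integral_const_mul] at h
  norm_num at h
  exact h.resolve_left hne

noncomputable def legendreCoeff (f : ℝ → ℝ) (n : ℕ) : ℝ :=
  ∫ x in (-1 : ℝ)..1, f x * (legendre n).eval x

theorem legendreCoeff_add_two {g : ℝ → ℝ} (hg : IntervalIntegrable g volume (-1) 1)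
    (n : ℕ) :
    ((n : ℝ) + 2) * legendreCoeff g (n + 2) =
      (2 * n + 3) * legendreCoeff (fun x => x * g x) (n + 1) - (n + 1) * legendreCoeff g n := by
  simp only [legendreCoeff, ← intervalIntegral.integral_const_mul]
  rw [← intervalIntegral.integral_sub]
  · refine intervalIntegral.integral_congr fun x _ => ?_
    have h := congrArg (eval x) (legendre_add_two n)
    simp only [eval_mul, eval_sub, eval_add, eval_natCast, eval_ofNat, eval_one, eval_X] at h
    linear_combination g x * h
  · exact (((hg.continuousOn_mul continuous_id.continuousOn).mul_continuousOn
      (legendre _).continuous.continuousOn).const_mul _)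
  · exact (hg.mul_continuousOn (legendre _).continuous.continuousOn).const_mul _

theorem integral_legendre_mul_self (n : ℕ) :
    ∫ x in (-1 : ℝ)..1, (legendre n).eval x * (legendre n).eval x = 2 / (2 * n + 1) := by
  rw [eq_div_iff (by positivity)]
  induction n using Nat.twoStepInduction with
  | zero => norm_num [legendre]
  | one => simp [legendre, ← sq, integral_pow]; norm_num
  | more n _ ih =>
    have hint : ∀ k, IntervalIntegrable (legendre k).eval volume (-1) 1 :=
      fun k => (legendre k).continuous.intervalIntegrable _ _
    have h₁ := legendreCoeff_add_two (hint (n + 2)) n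
    have h₂ := legendreCoeff_add_two (hint (n + 1)) (n + 1)
    have hK : ∫ x in (-1 : ℝ)..1, x * (legendre (n + 1)).eval x * (legendre (n + 2)).eval x =
        ∫ x in (-1 : ℝ)..1, x * (legendre (n + 2)).eval x * (legendre (n + 1)).eval x :=
      intervalIntegral.integral_congr fun x _ => by ring
    simp only [legendreCoeff] at h₁ h₂
    rw [integral_legendre_mul_legendre_of_ne (m := n + 2) (n := n) (by omega)] at h₁
    rw [integral_legendre_mul_legendre_of_ne (m := n + 1) (n := n + 3) (by omega), hK] at h₂
    push_cast at h₂ ih ⊢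
    refine mul_left_cancel₀ (by positivity : (n : ℝ) + 2 ≠ 0) ?_
    linear_combination
      (2 * (n : ℝ) + 5) * h₁ - (2 * (n : ℝ) + 3) * h₂ + ((n : ℝ) + 2) * ih

theorem mul_legendreCoeff_succ {f : ℝ → ℝ} (hf : ContDiffOn ℝ 1 f (Icc (-1) 1)) (n : ℕ) :
    (2 * (n : ℝ) + 3) * legendreCoeff f (n + 1) =
      legendreCoeff (derivWithin f (Icc (-1) 1)) n -
        legendreCoeff (derivWithin f (Icc (-1) 1)) (n + 2) := by
  set f' := derivWithin f (Icc (-1) 1)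
  set R := legendre (n + 2) - legendre n
  have hIcc : uIcc (-1 : ℝ) 1 = Icc (-1) 1 := uIcc_of_le (by norm_num)
  have hf' : ContinuousOn f' (uIcc (-1) 1) :=
    hIcc ▸ hf.continuousOn_derivWithin (uniqueDiffOn_Icc (by norm_num)) le_rfl
  have hR : ∀ x : ℝ, x ^ 2 = 1 → R.eval x = 0 := fun x hx => by
    simp [R, legendre_eval_of_sq_eq_one hx, pow_add, hx]
  have ibp := intervalIntegral.integral_mul_deriv_eq_deriv_mul_of_hasDerivWithinAt
    (u := f) (v := R.eval) (u' := f') (v' := (derivative R).eval)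
    (by rw [hIcc]; exact fun x hx => (hf.differentiableOn one_ne_zero x hx).hasDerivWithinAt)
    (fun x _ => (R.hasDerivAt x).hasDerivWithinAt) (hf'.intervalIntegrable)
    ((derivative R).continuous.intervalIntegrable _ _)
  rw [hR 1 (by norm_num), hR (-1) (by norm_num)] at ibp
  simp only [derivative_legendre_add_two_sub, R, eval_mul, eval_sub, eval_add, eval_natCast,
    eval_ofNat] at ibp
  have hlhs : ∫ x in (-1 : ℝ)..1, f x * ((2 * n + 3) * (legendre (n + 1)).eval x) =
      (2 * n + 3) * legendreCoeff f (n + 1) := by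
    simp only [mul_left_comm (f _)]
    exact intervalIntegral.integral_const_mul _ _
  have hrhs : ∫ x in (-1 : ℝ)..1, f' x * ((legendre (n + 2)).eval x - (legendre n).eval x) =
      legendreCoeff f' (n + 2) - legendreCoeff f' n := by
    simp only [mul_sub]
    exact intervalIntegral.integral_sub
      (hf'.intervalIntegrable.mul_continuousOn (legendre _).continuous.continuousOn)
      (hf'.intervalIntegrable.mul_continuousOn (legendre _).continuous.continuousOn)
  rw [hlhs, hrhs] at ibp
  linarith

theorem tendsto_legendreCoeff_mul_sqrt {f : ℝ → ℝ} (hf : ContinuousOn f (Icc (-1) 1)) :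
    Tendsto (fun n => legendreCoeff f n * √((n : ℝ) + 1 / 2)) atTop (𝓝 0) := by
  set μ := volume.restrict (Icc (-1 : ℝ) 1)
  have hμ : ∀ F : ℝ → ℝ, ∫ x, F x ∂μ = ∫ x in (-1 : ℝ)..1, F x := fun F => by
    rw [intervalIntegral.integral_of_le (by norm_num), integral_Icc_eq_integral_Ioc]
  set e : ℕ → ℝ → ℝ := fun n x => √((n : ℝ) + 1 / 2) * (legendre n).eval x
  have he : ∀ n, MemLp (e n) 2 μ := fun n =>
    ((legendre n).continuous.const_mul _).continuousOn.memLp_restrict isCompact_Icc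
      measurableSet_Icc 2
  have horth : ∀ m n, ∫ x, e m x * e n x ∂μ = if m = n then 1 else 0 := by
    intro m n
    rw [hμ, intervalIntegral.integral_congr (g := fun x => √((m : ℝ) + 1 / 2) *
      √((n : ℝ) + 1 / 2) * ((legendre m).eval x * (legendre n).eval x)) fun x _ => by ring,
      intervalIntegral.integral_const_mul]
    split_ifs with h
    · subst h
      rw [integral_legendre_mul_self, Real.mul_self_sqrt (by positivity)]
      field_simp
    · rw [integral_legendre_mul_legendre_of_ne h, mul_zero]
  have h := tendsto_integral_mul_of_orthonormal he horth
    (hf.memLp_restrict isCompact_Icc measurableSet_Icc 2)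
  rw [Nat.cofinite_eq_atTop] at h
  refine h.congr fun n => ?_
  simp only [hμ, e, legendreCoeff, mul_left_comm (f _), intervalIntegral.integral_const_mul]
  ring

/-- The factor `(n + 1) ^ m` rather than `n ^ m` makes `legendreWeight_succ_le` hold at `n = 0`. -/
noncomputable def legendreWeight (m n : ℕ) : ℝ := ((n : ℝ) + 1) ^ m * √((n : ℝ) + 1 / 2)

theorem legendreWeight_nonneg (m n : ℕ) : 0 ≤ legendreWeight m n := by
  unfold legendreWeight; positivity

theorem legendreWeight_mono (m : ℕ) : Monotone (legendreWeight m) := fun i j hij => by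
  unfold legendreWeight; gcongr

theorem legendreWeight_succ_le (m n : ℕ) :
    legendreWeight (m + 1) (n + 1) ≤ 2 ^ (m + 1) * (2 * n + 3) * legendreWeight m n := by
  have hpow : ((n : ℝ) + 2) ^ (m + 1) ≤ (2 * n + 3) * (2 ^ m * ((n : ℝ) + 1) ^ m) := by
    rw [pow_succ', ← mul_pow]
    gcongr <;> linarith
  have hsqrt : √((n : ℝ) + 1 + 1 / 2) ≤ 2 * √((n : ℝ) + 1 / 2) := by
    rw [Real.sqrt_le_left (by positivity), mul_pow, Real.sq_sqrt (by positivity)]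
    linarith
  unfold legendreWeight
  push_cast
  calc ((n : ℝ) + 1 + 1) ^ (m + 1) * √((n : ℝ) + 1 + 1 / 2)
      ≤ ((2 * n + 3) * (2 ^ m * ((n : ℝ) + 1) ^ m)) * (2 * √((n : ℝ) + 1 / 2)) := by
        rw [add_assoc, one_add_one_eq_two]; gcongr
    _ = 2 ^ (m + 1) * (2 * n + 3) * (((n : ℝ) + 1) ^ m * √((n : ℝ) + 1 / 2)) := by ring

theorem tendsto_legendreCoeff_mul_legendreWeight {m : ℕ} {f : ℝ → ℝ}
    (hf : ContDiffOn ℝ m f (Icc (-1) 1)) :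
    Tendsto (fun n => legendreCoeff f n * legendreWeight m n) atTop (𝓝 0) := by
  induction m generalizing f with
  | zero => simpa [legendreWeight] using tendsto_legendreCoeff_mul_sqrt hf.continuousOn
  | succ m ih =>
    have hf' : ContDiffOn ℝ m (derivWithin f (Icc (-1) 1)) (Icc (-1) 1) :=
      hf.derivWithin (uniqueDiffOn_Icc (by norm_num)) (by push_cast; rfl)
    refine tendsto_mul_of_two_mul_add_three_mul_eq_sub (by positivity : (0 : ℝ) ≤ 2 ^ (m + 1))
      (mul_legendreCoeff_succ (hf.of_le (by exact_mod_cast Nat.le_add_left 1 m)))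
      (legendreWeight_nonneg m) (legendreWeight_mono m) (fun n => ?_) (ih hf')
    rw [abs_of_nonneg (legendreWeight_nonneg _ _)]
    exact legendreWeight_succ_le m n

theorem eq_legendre_eval_of_recurrence {p : ℕ → ℝ → ℝ} (hp0 : ∀ x, p 0 x = 1)
    (hp1 : ∀ x, p 1 x = x)
    (hrec : ∀ (n : ℕ) (x : ℝ),
      ((n : ℝ) + 2) * p (n + 2) x =
        (2 * (n : ℝ) + 3) * x * p (n + 1) x - ((n : ℝ) + 1) * p n x)
    (n : ℕ) (x : ℝ) : p n x = (legendre n).eval x := by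
  induction n using Nat.twoStepInduction generalizing x with
  | zero => simp [hp0, legendre]
  | one => simp [hp1, legendre]
  | more n ih₀ ih₁ =>
    have h := congrArg (eval x) (legendre_add_two n)
    simp only [eval_mul, eval_sub, eval_add, eval_natCast, eval_ofNat, eval_one, eval_X] at h
    refine mul_left_cancel₀ (by positivity : (n : ℝ) + 2 ≠ 0) ?_
    rw [hrec, ih₀, ih₁, h]

/-- For `f ∈ C^ℓ([-1,1])`, the normalized Legendre coefficients satisfy
`α_k k^ℓ → 0` as `k → ∞`. -/
theorem legendre_coefficient_decay
    (p : ℕ → ℝ → ℝ)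
    (hp0 : ∀ x, p 0 x = 1)
    (hp1 : ∀ x, p 1 x = x)
    (hrec : ∀ (n : ℕ) (x : ℝ),
      ((n : ℝ) + 2) * p (n + 2) x
        = (2 * (n : ℝ) + 3) * x * p (n + 1) x - ((n : ℝ) + 1) * p n x)
    (P : ℕ → ℝ → ℝ)
    (hP : ∀ k x, P k x = Real.sqrt ((k : ℝ) + 1/2) * p k x)
    (ℓ : ℕ) (f : ℝ → ℝ)
    (hf : ContDiffOn ℝ ℓ f (Set.Icc (-1 : ℝ) 1))
    (α : ℕ → ℝ)
    (hα : ∀ k, α k = (1/2) * ∫ x in (-1 : ℝ)..1, f x * P k x) :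
    Filter.Tendsto (fun k : ℕ => α k * (k : ℝ) ^ ℓ) Filter.atTop (nhds 0) := by
  have hp := eq_legendre_eval_of_recurrence hp0 hp1 hrec
  have hαc : ∀ k, α k = 1 / 2 * √((k : ℝ) + 1 / 2) * legendreCoeff f k := by
    intro k
    rw [hα, legendreCoeff, mul_assoc,
      ← intervalIntegral.integral_const_mul (√((k : ℝ) + 1 / 2))]
    congr 1
    exact intervalIntegral.integral_congr fun x _ => by simp only [hP, hp]; ring
  refine squeeze_zero_norm (a := fun k => 1 / 2 * ‖legendreCoeff f k * legendreWeight ℓ k‖)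
    (fun k => ?_)
    (by simpa only [norm_zero, mul_zero] using
      (tendsto_legendreCoeff_mul_legendreWeight hf).norm.const_mul (1 / 2))
  have h : α k * (k : ℝ) ^ ℓ =
      1 / 2 * (legendreCoeff f k * ((k : ℝ) ^ ℓ * √((k : ℝ) + 1 / 2))) := by
    rw [hαc]; ring
  rw [h, norm_mul, norm_mul (legendreCoeff f k), norm_mul (legendreCoeff f k),
    Real.norm_of_nonneg (by norm_num : (0 : ℝ) ≤ 1 / 2),
    Real.norm_of_nonneg (by positivity : (0 : ℝ) ≤ (k : ℝ) ^ ℓ * √((k : ℝ) + 1 / 2)),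
    Real.norm_of_nonneg (legendreWeight_nonneg ℓ k), legendreWeight]
  gcongr
  linarith
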